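/- arXiv:2501.07023 — 7 statements merged into one kernel-verified Lean document; each statement's English description precedes it below -/
import Mathlib

section
/- Let T be a well-pruned tree of sequences and ξ an inductive probability measure on T. Then for every natural number n such that Lv_n(T) ≠ ∅, one has ∑' over t ∈ Lv_n(T) of ξ(t) = 1. -/
open scoped ENNReal
open MeasureTheory

noncomputable section

/-- A tree of sequences: a nonempty set of finite lists of naturals closed under prefixes. -/
def IsTree (T : Set (List ℕ)) : Prop :=
  T.Nonempty ∧ ∀ s t : List ℕ, s <+: t → t ∈ T → s ∈ T

/-- `t` is a maximal node of `T`: it has no successor in `T`. -/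
def IsMaxNode (T : Set (List ℕ)) (t : List ℕ) : Prop :=
  ∀ k : ℕ, t ++ [k] ∉ T

/-- A probability tree on `T`. -/
def IsProbTree (T : Set (List ℕ)) (p : List ℕ → ℕ → ℝ≥0∞) : Prop :=
  ∀ t ∈ T, ¬ IsMaxNode T t →
    (∀ k : ℕ, t ++ [k] ∉ T → p t k = 0) ∧ (∑' k : ℕ, p t k = 1)

/-- The measure induced by a probability tree: `Ξ_p(t) = ∏_{i<|t|} p (t↾i) (t i)`. -/
def Xi (p : List ℕ → ℕ → ℝ≥0∞) (t : List ℕ) : ℝ≥0∞ :=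
  ∏ i ∈ Finset.range t.length, p (t.take i) (t.getD i 0)

/-- An inductive probability measure on `T`. -/
def IsIPM (T : Set (List ℕ)) (ξ : List ℕ → ℝ≥0∞) : Prop :=
  ξ [] = 1 ∧ ∀ t ∈ T, ¬ IsMaxNode T t →
    ξ t = ∑' k : {k : ℕ // t ++ [k] ∈ T}, ξ (t ++ [k.1])

/-- The set of infinite branches of `T`. -/
def limT (T : Set (List ℕ)) : Set (ℕ → ℕ) :=
  {x | ∀ n : ℕ, (List.range n).map x ∈ T}

/-- `T` is pruned: every node has a successor in `T`. -/
def Pruned (T : Set (List ℕ)) : Prop := ∀ t ∈ T, ∃ k : ℕ, t ++ [k] ∈ T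

/-- The basic clopen set `[t]` of branches through `t`. -/
def cyl (T : Set (List ℕ)) (t : List ℕ) : Set ↥(limT T) :=
  {x | (List.range t.length).map x.1 = t}

/-- `T` is well-pruned: every node extends to any nonempty level above it. -/
def WellPruned (T : Set (List ℕ)) : Prop :=
  ∀ t ∈ T, ∀ n : ℕ, t.length < n → (∃ s ∈ T, s.length = n) →
    ∃ t' ∈ T, t'.length = n ∧ t <+: t'

/-- `Lv_n(T)`, as a type. -/
abbrev Level (T : Set (List ℕ)) (n : ℕ) : Type :=
  {t : List ℕ // t ∈ T ∧ t.length = n}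

namespace IsTree

variable {T : Set (List ℕ)}

lemma mem_of_prefix (hT : IsTree T) {s t : List ℕ} (hst : s <+: t) (ht : t ∈ T) : s ∈ T :=
  hT.2 s t hst ht

lemma nil_mem (hT : IsTree T) : [] ∈ T :=
  let ⟨_, ht⟩ := hT.1
  hT.mem_of_prefix List.nil_prefix ht

def levelSuccEquiv (hT : IsTree T) (n : ℕ) :
    (Σ t : Level T n, {k : ℕ // t.1 ++ [k] ∈ T}) ≃ Level T (n + 1) :=
  Equiv.ofBijective (fun σ => ⟨σ.1.1 ++ [σ.2.1], σ.2.2, by simp [σ.1.2.2]⟩) <| by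
    constructor
    · intro ⟨⟨t, _, ht⟩, k⟩ ⟨⟨t', _, ht'⟩, k'⟩ h
      obtain ⟨rfl, hk⟩ := List.append_inj (congrArg Subtype.val h) (ht.trans ht'.symm)
      obtain rfl : k = k' := Subtype.ext (by simpa using hk)
      rfl
    · rintro ⟨s, hs, hsl⟩
      have hne : s ≠ [] := List.ne_nil_of_length_eq_add_one hsl
      refine ⟨⟨⟨s.dropLast, hT.mem_of_prefix s.dropLast_prefix hs, by simp [hsl]⟩,
        ⟨s.getLast hne, ?_⟩⟩, Subtype.ext (s.dropLast_append_getLast hne)⟩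
      rwa [s.dropLast_append_getLast hne]

end IsTree

lemma WellPruned.not_isMaxNode {T : Set (List ℕ)} (hwp : WellPruned T) {t : List ℕ}
    (ht : t ∈ T) (hnext : ∃ s ∈ T, s.length = t.length + 1) : ¬ IsMaxNode T t := by
  intro hmax
  obtain ⟨t', ht', ht'l, htt'⟩ := hwp t ht _ (Nat.lt_succ_self _) hnext
  obtain ⟨u, rfl⟩ := htt'
  obtain ⟨k, rfl⟩ : ∃ k, u = [k] := List.length_eq_one_iff.mp (by simpa using ht'l)
  exact hmax k ht'

namespace IsIPM

variable {T : Set (List ℕ)} {ξ : List ℕ → ℝ≥0∞}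

lemma tsum_level_zero (hT : IsTree T) (hξ : IsIPM T ξ) : ∑' t : Level T 0, ξ t.1 = 1 := by
  rw [tsum_eq_single ⟨[], hT.nil_mem, rfl⟩, hξ.1]
  rintro ⟨t, _, ht⟩ hne
  exact absurd (Subtype.ext (List.length_eq_zero_iff.mp ht)) hne

/-- Once level `n + 1` is nonempty, no node of level `n` is maximal, so the mass of each node
splits over its children. -/
lemma tsum_level_succ (hT : IsTree T) (hwp : WellPruned T) (hξ : IsIPM T ξ) {n : ℕ}
    (hne : ∃ s ∈ T, s.length = n + 1) :
    ∑' t : Level T (n + 1), ξ t.1 = ∑' t : Level T n, ξ t.1 :=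
  calc ∑' t : Level T (n + 1), ξ t.1
      = ∑' σ : (Σ t : Level T n, {k : ℕ // t.1 ++ [k] ∈ T}), ξ (σ.1.1 ++ [σ.2.1]) :=
        ((hT.levelSuccEquiv n).tsum_eq (fun t => ξ t.1)).symm
    _ = ∑' t : Level T n, ∑' k : {k : ℕ // t.1 ++ [k] ∈ T}, ξ (t.1 ++ [k.1]) :=
        ENNReal.tsum_sigma' _
    _ = ∑' t : Level T n, ξ t.1 := tsum_congr fun ⟨t, ht, htl⟩ =>
        (hξ.2 t ht (hwp.not_isMaxNode ht (htl ▸ hne))).symm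

end IsIPM

theorem stmt1 (T : Set (List ℕ)) (ξ : List ℕ → ℝ≥0∞)
    (hT : IsTree T) (hwp : WellPruned T) (hξ : IsIPM T ξ) :
    ∀ n : ℕ, (∃ t ∈ T, t.length = n) →
      ∑' t : {t : List ℕ // t ∈ T ∧ t.length = n}, ξ t.1 = 1 := by
  intro n hn
  induction n with
  | zero => exact hξ.tsum_level_zero hT
  | succ n ih =>
    obtain ⟨s, hs, hsl⟩ := hn
    rw [hξ.tsum_level_succ hT hwp ⟨s, hs, hsl⟩]
    exact ih ⟨s.dropLast, hT.mem_of_prefix s.dropLast_prefix hs, by simp [hsl]⟩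
end
end

section
/- Let T be a tree of sequences, ξ an inductive probability measure on T, and A a front of T. Then ∑' over s ∈ A of ξ(s) = 1. Moreover, for every t ∈ T that is a prefix of some element of A, ξ(t) = ∑' over {s ∈ A : t is a prefix of s} of ξ(s). -/
open scoped ENNReal
open MeasureTheory

noncomputable section

/-- `A` is a front of `T`. -/
def IsFront (T A : Set (List ℕ)) : Prop :=
  A ⊆ T ∧
  (∀ s ∈ A, ∀ t ∈ A, s <+: t → s = t) ∧
  (∀ x ∈ limT T, ∃ n : ℕ, (List.range n).map x ∈ A) ∧
  (∀ t ∈ T, IsMaxNode T t → ∃ s ∈ A, s <+: t)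

/-!
Finite sums of `ξ` over an antichain of extensions of `t` are at most `ξ t`, by induction on
depth: group the extensions by the child of `t` they pass through and use
`ξ t = ∑ ξ (t ++ [k])`.
Conversely, suppose the front mass below some `t` with no prefix in `A` falls short of `ξ t`.
Then `ξ` splits exactly over the children of `t`, while the front mass is superadditive over
them, so the deficit passes to some child; iterating yields an infinite branch of `T` avoiding
`A`, which a front cannot have.
-/

def frontMass (A : Set (List ℕ)) (ξ : List ℕ → ℝ≥0∞) (t : List ℕ) : ℝ≥0∞ :=
  ∑' s : {s : List ℕ // s ∈ A ∧ t <+: s}, ξ s.1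

section

variable {T A : Set (List ℕ)} {ξ : List ℕ → ℝ≥0∞}

lemma IsTree.nil_mem_s2 (hT : IsTree T) : [] ∈ T :=
  let ⟨t, ht⟩ := hT.1
  hT.2 [] t List.nil_prefix ht

lemma List.IsPrefix.append_getD_length {l s : List ℕ} (h : l <+: s) (hlt : l.length < s.length) :
    l ++ [s.getD l.length 0] <+: s := by
  obtain ⟨r, rfl⟩ := h
  cases r with
  | nil => simp at hlt
  | cons a r => exact ⟨r, by simp⟩

lemma IsIPM.sum_children_le (hξ : IsIPM T ξ) {t : List ℕ} (ht : t ∈ T) (K : Finset ℕ)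
    (hK : ∀ k ∈ K, t ++ [k] ∈ T) :
    ∑ k ∈ K, ξ (t ++ [k]) ≤ ξ t := by
  classical
  rcases K.eq_empty_or_nonempty with rfl | ⟨k, hk⟩
  · simp
  rw [hξ.2 t ht fun hmax => hmax k (hK k hk), ← Finset.sum_subtype_of_mem _ hK]
  exact ENNReal.sum_le_tsum _

lemma sum_le_of_isAntichain (hT : IsTree T) (hξ : IsIPM T ξ) (hAT : A ⊆ T)
    (hA : ∀ s ∈ A, ∀ t ∈ A, s <+: t → s = t) (n : ℕ) {t : List ℕ} (ht : t ∈ T)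
    (F : Finset (List ℕ)) (hF : ∀ s ∈ F, s ∈ A ∧ t <+: s ∧ s.length ≤ t.length + n) :
    ∑ s ∈ F, ξ s ≤ ξ t := by
  induction n generalizing t F with
  | zero =>
    have hFt : F ⊆ {t} := fun s hs => by
      obtain ⟨-, hts, hlen⟩ := hF s hs
      exact Finset.mem_singleton.2 (hts.eq_of_length (le_antisymm hts.length_le hlen)).symm
    exact (Finset.sum_le_sum_of_subset hFt).trans_eq (Finset.sum_singleton _ _)
  | succ n ih =>
    by_cases htF : t ∈ F
    · have hFt : F ⊆ {t} := fun s hs =>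
        Finset.mem_singleton.2 (hA t (hF t htF).1 s (hF s hs).1 (hF s hs).2.1).symm
      exact (Finset.sum_le_sum_of_subset hFt).trans_eq (Finset.sum_singleton _ _)
    let child : List ℕ → ℕ := fun s => s.getD t.length 0
    have hchild : ∀ s ∈ F, t ++ [child s] <+: s := fun s hs =>
      (hF s hs).2.1.append_getD_length <| lt_of_le_of_ne (hF s hs).2.1.length_le
        fun hlen => htF ((hF s hs).2.1.eq_of_length hlen ▸ hs)
    have hchild_mem : ∀ k ∈ F.image child, t ++ [k] ∈ T := by
      simp only [Finset.mem_image]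
      rintro _ ⟨s, hs, rfl⟩
      exact hT.2 _ s (hchild s hs) (hAT (hF s hs).1)
    calc ∑ s ∈ F, ξ s = ∑ k ∈ F.image child, ∑ s ∈ F with child s = k, ξ s :=
          (Finset.sum_fiberwise_of_maps_to (fun s hs => Finset.mem_image_of_mem child hs) ξ).symm
      _ ≤ ∑ k ∈ F.image child, ξ (t ++ [k]) := by
          refine Finset.sum_le_sum fun k hk => ih (hchild_mem k hk) _ fun s hs => ?_
          obtain ⟨hsF, rfl⟩ := Finset.mem_filter.1 hs
          refine ⟨(hF s hsF).1, hchild s hsF, ?_⟩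
          simpa [Nat.add_assoc, Nat.add_comm 1 n] using (hF s hsF).2.2
      _ ≤ ξ t := hξ.sum_children_le ht _ hchild_mem

lemma frontMass_le (hT : IsTree T) (hξ : IsIPM T ξ) (hA : IsFront T A) {t : List ℕ}
    (ht : t ∈ T) : frontMass A ξ t ≤ ξ t := by
  refine ENNReal.summable.tsum_le_of_sum_le fun F => ?_
  refine (Finset.sum_map F (Function.Embedding.subtype _) ξ).symm.trans_le ?_
  refine sum_le_of_isAntichain hT hξ hA.1 hA.2.1 (F.sup fun s => s.1.length) ht _ fun s hs => ?_
  obtain ⟨s, hsF, rfl⟩ := Finset.mem_map.1 hs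
  exact ⟨s.2.1, s.2.2, (Finset.le_sup (f := fun s => s.1.length) hsF).trans le_add_self⟩

lemma tsum_frontMass_append_le (t : List ℕ) :
    ∑' k, frontMass A ξ (t ++ [k]) ≤ frontMass A ξ t := by
  let through (k : ℕ) := {s // s ∈ A ∧ t ++ [k] <+: s}
  refine (ENNReal.tsum_sigma' fun p : Σ k, through k => ξ p.2.1).symm.trans_le ?_
  refine ENNReal.tsum_comp_le_tsum_of_injective (g := fun s : {s // s ∈ A ∧ t <+: s} => ξ s.1)
    (f := fun p : Σ k, through k => ⟨p.2.1, p.2.2.1, (t.prefix_append _).trans p.2.2.2⟩) ?_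
  rintro ⟨k, s, hs⟩ ⟨k', s', hs'⟩ hss'
  obtain rfl : s = s' := congrArg Subtype.val hss'
  obtain rfl : k = k' := by
    simpa using (List.prefix_of_prefix_length_le hs.2 hs'.2 (by simp)).eq_of_length (by simp)
  rfl

lemma le_frontMass_of_mem {t : List ℕ} (ht : t ∈ A) : ξ t ≤ frontMass A ξ t :=
  ENNReal.le_tsum (⟨t, ht, List.prefix_refl t⟩ : {s : List ℕ // s ∈ A ∧ t <+: s})

lemma exists_branch_of_forall_exists_append {P : List ℕ → Prop} {t : List ℕ} (ht : P t)
    (h : ∀ s, P s → ∃ k, P (s ++ [k])) :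
    ∃ x : ℕ → ℕ, ∀ n, ∃ s, P s ∧ (List.range n).map x <+: s := by
  choose next hnext using h
  let u : ℕ → {s // P s} := fun n =>
    Nat.rec ⟨t, ht⟩ (fun _ s => ⟨s.1 ++ [next s.1 s.2], hnext s.1 s.2⟩) n
  have hu_succ (n : ℕ) : (u (n + 1)).1 = (u n).1 ++ [next (u n).1 (u n).2] := rfl
  have hu_length (n : ℕ) : (u n).1.length = t.length + n := by
    induction n with
    | zero => rfl
    | succ n ih => simp [hu_succ, ih, Nat.add_assoc]
  refine ⟨fun i => (u (i + 1)).1.getD i 0, fun n => ⟨(u n).1, (u n).2, ?_⟩⟩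
  induction n with
  | zero => exact List.nil_prefix
  | succ n ih =>
    have hstep : (u n).1 <+: (u (n + 1)).1 := ⟨_, (hu_succ n).symm⟩
    have hlen : ((List.range n).map fun i => (u (i + 1)).1.getD i 0).length <
        (u (n + 1)).1.length := by
      simp only [List.length_map, List.length_range, hu_length]
      omega
    simpa [List.range_succ] using (ih.trans hstep).append_getD_length hlen

lemma exists_append_frontMass_lt (hξ : IsIPM T ξ) (hA : IsFront T A) {t : List ℕ}
    (ht : t ∈ T) (havoid : ∀ s ∈ A, ¬ s <+: t) (hlt : frontMass A ξ t < ξ t) :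
    ∃ k, t ++ [k] ∈ T ∧ (∀ s ∈ A, ¬ s <+: t ++ [k]) ∧
      frontMass A ξ (t ++ [k]) < ξ (t ++ [k]) := by
  have hnmax : ¬ IsMaxNode T t := fun hmax =>
    let ⟨s, hsA, hst⟩ := hA.2.2.2 t ht hmax
    havoid s hsA hst
  by_contra! hchild
  have hchild_le (k : {k // t ++ [k] ∈ T}) : ξ (t ++ [k.1]) ≤ frontMass A ξ (t ++ [k.1]) := by
    by_cases hk : ∃ s ∈ A, s <+: t ++ [k.1]
    · obtain ⟨s, hsA, hs⟩ := hk
      obtain rfl | hst := List.prefix_concat_iff.1 hs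
      · exact le_frontMass_of_mem hsA
      · exact absurd hst (havoid s hsA)
    · exact hchild k.1 k.2 fun s hsA hs => hk ⟨s, hsA, hs⟩
  refine hlt.not_ge ?_
  calc ξ t = ∑' k : {k // t ++ [k] ∈ T}, ξ (t ++ [k.1]) := hξ.2 t ht hnmax
    _ ≤ ∑' k : {k // t ++ [k] ∈ T}, frontMass A ξ (t ++ [k.1]) :=
        ENNReal.tsum_le_tsum hchild_le
    _ ≤ ∑' k, frontMass A ξ (t ++ [k]) :=
        ENNReal.tsum_comp_le_tsum_of_injective Subtype.val_injective _
    _ ≤ frontMass A ξ t := tsum_frontMass_append_le t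

lemma frontMass_eq (hT : IsTree T) (hξ : IsIPM T ξ) (hA : IsFront T A) {t : List ℕ}
    (ht : t ∈ T) (hpre : ∀ s ∈ A, s <+: t → s = t) : frontMass A ξ t = ξ t := by
  refine le_antisymm (frontMass_le hT hξ hA ht) ?_
  by_cases htA : t ∈ A
  · exact le_frontMass_of_mem htA
  by_contra! hlt
  have havoid : ∀ s ∈ A, ¬ s <+: t := fun s hs hst => htA (hpre s hs hst ▸ hs)
  obtain ⟨x, hx⟩ := exists_branch_of_forall_exists_append
    (P := fun s => s ∈ T ∧ (∀ a ∈ A, ¬ a <+: s) ∧ frontMass A ξ s < ξ s)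
    ⟨ht, havoid, hlt⟩
    fun s hs => exists_append_frontMass_lt hξ hA hs.1 hs.2.1 hs.2.2
  have hxT : x ∈ limT T := fun n =>
    let ⟨s, hs, hxs⟩ := hx n
    hT.2 _ s hxs hs.1
  obtain ⟨n, hn⟩ := hA.2.2.1 x hxT
  obtain ⟨s, hs, hxs⟩ := hx n
  exact hs.2.1 _ hn hxs

end

theorem stmt2 (T A : Set (List ℕ)) (ξ : List ℕ → ℝ≥0∞)
    (hT : IsTree T) (hξ : IsIPM T ξ) (hA : IsFront T A) :
    (∑' s : ↥A, ξ s.1 = 1) ∧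
    (∀ t ∈ T, (∃ s ∈ A, t <+: s) →
      ξ t = ∑' s : {s : List ℕ // s ∈ A ∧ t <+: s}, ξ s.1) := by
  refine ⟨?_, ?_⟩
  · calc ∑' s : ↥A, ξ s.1 = frontMass A ξ [] :=
          (Equiv.subtypeEquivRight fun s => (and_iff_left List.nil_prefix).symm).tsum_eq
            fun s => ξ s.1
      _ = ξ [] := frontMass_eq hT hξ hA hT.nil_mem_s2 fun s _ hs => List.prefix_nil.1 hs
      _ = 1 := hξ.1
  · rintro t ht ⟨s, hsA, hts⟩
    refine (frontMass_eq hT hξ hA ht fun s' hs'A hs't => ?_).symm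
    obtain rfl : s' = s := hA.2.1 s' hs'A s hsA (hs't.trans hts)
    exact hs't.eq_of_length (le_antisymm hs't.length_le hts.length_le)
end
end

section
/- Let T be a tree of sequences and p, q probability trees on T. Then Ξ_p(t) = Ξ_q(t) for all t ∈ T if and only if both of the following hold: (i) {t ∈ T : Ξ_p(t) > 0} = {t ∈ T : Ξ_q(t) > 0}; and (ii) for every t ∈ T and k ∈ ℕ with t ++ [k] ∈ T, if Ξ_p(t ++ [k]) > 0 then p t k = q t k. -/
open scoped ENNReal
open MeasureTheory

noncomputable section

/-!
Ξ is multiplicative along the tree: `Ξ(t ++ [k]) = Ξ(t) · p t k`. If `Ξ_p = Ξ_q`, the supports agree,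
and at a node with `Ξ_p(t ++ [k]) > 0` the common factor `Ξ(t)` is nonzero and finite (every transition
probability is at most `1`), so it cancels. Conversely, induct on `t` from its last entry: where
`Ξ_p(t ++ [k]) = 0` also `Ξ_q(t ++ [k]) = 0` by (i), and otherwise (ii) matches the last factors.
-/

lemma Xi_nil (p : List ℕ → ℕ → ℝ≥0∞) : Xi p [] = 1 := by
  simp [Xi]

lemma Xi_append (p : List ℕ → ℕ → ℝ≥0∞) (t : List ℕ) (k : ℕ) :
    Xi p (t ++ [k]) = Xi p t * p t k := by
  unfold Xi
  rw [List.length_append, List.length_singleton, Finset.prod_range_succ]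
  congr 1
  · refine Finset.prod_congr rfl fun i hi => ?_
    rw [Finset.mem_range] at hi
    rw [List.take_append_of_le_length hi.le, List.getD_append _ _ _ _ hi]
  · rw [List.take_left, List.getD_append_right _ _ _ _ le_rfl]
    simp

section

variable {T : Set (List ℕ)} {p q : List ℕ → ℕ → ℝ≥0∞}

lemma IsProbTree.le_one (hp : IsProbTree T p) {t : List ℕ} {k : ℕ} (ht : t ∈ T)
    (htk : t ++ [k] ∈ T) : p t k ≤ 1 :=
  calc p t k ≤ ∑' j, p t j := ENNReal.le_tsum k
    _ = 1 := (hp t ht fun hmax => hmax k htk).2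

lemma Xi_le_one (hT : IsTree T) (hp : IsProbTree T p) {t : List ℕ} (ht : t ∈ T) :
    Xi p t ≤ 1 := by
  refine Finset.prod_le_one (fun _ _ => zero_le) fun i hi => ?_
  rw [Finset.mem_range] at hi
  have hprefix : t.take i ++ [t.getD i 0] <+: t := by
    rw [List.getD_eq_getElem _ _ hi, ← List.concat_eq_append, List.take_concat_get hi]
    exact List.take_prefix _ _
  exact hp.le_one (hT.2 _ _ (List.take_prefix _ _) ht) (hT.2 _ _ hprefix ht)

lemma Xi_ne_top (hT : IsTree T) (hp : IsProbTree T p) {t : List ℕ} (ht : t ∈ T) :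
    Xi p t ≠ ⊤ :=
  ne_top_of_le_ne_top ENNReal.one_ne_top (Xi_le_one hT hp ht)

lemma eq_of_Xi_eq_of_Xi_append_eq (hT : IsTree T) (hp : IsProbTree T p)
    {t : List ℕ} {k : ℕ} (ht : t ∈ T) (hXi : Xi p t = Xi q t)
    (hXik : Xi p (t ++ [k]) = Xi q (t ++ [k])) (hpos : 0 < Xi p (t ++ [k])) :
    p t k = q t k := by
  rw [Xi_append, Xi_append, ← hXi] at hXik
  rw [Xi_append] at hpos
  exact (ENNReal.mul_right_inj (left_ne_zero_of_mul hpos.ne') (Xi_ne_top hT hp ht)).mp hXik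

lemma Xi_eq_of_zero_imp_zero (hT : IsTree T)
    (hzero : ∀ t ∈ T, Xi p t = 0 → Xi q t = 0)
    (hprob : ∀ t ∈ T, ∀ k : ℕ, t ++ [k] ∈ T → 0 < Xi p (t ++ [k]) → p t k = q t k) :
    ∀ t ∈ T, Xi p t = Xi q t := by
  intro t
  induction t using List.reverseRecOn with
  | nil => intro _; rw [Xi_nil, Xi_nil]
  | append_singleton s k ih =>
    intro hsk
    have hs : s ∈ T := hT.2 _ _ ⟨[k], rfl⟩ hsk
    rcases (zero_le : 0 ≤ Xi p (s ++ [k])).eq_or_lt with hp0 | hpos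
    · rw [← hp0, hzero _ hsk hp0.symm]
    · rw [Xi_append, Xi_append, ih hs, hprob s hs k hsk hpos]

end

theorem stmt3_general (T : Set (List ℕ)) (p q : List ℕ → ℕ → ℝ≥0∞)
    (hT : IsTree T) (hp : IsProbTree T p) :
    (∀ t ∈ T, Xi p t = Xi q t) ↔
      (({t | t ∈ T ∧ 0 < Xi p t} = {t | t ∈ T ∧ 0 < Xi q t}) ∧
        (∀ t ∈ T, ∀ k : ℕ, t ++ [k] ∈ T → 0 < Xi p (t ++ [k]) → p t k = q t k)) := by
  constructor
  · intro h
    refine ⟨Set.ext fun t => and_congr_right fun ht => by rw [h t ht], ?_⟩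
    intro t ht k hk hpos
    exact eq_of_Xi_eq_of_Xi_append_eq hT hp ht (h t ht) (h _ hk) hpos
  · rintro ⟨hsupp, hprob⟩
    refine Xi_eq_of_zero_imp_zero hT (fun t ht hp0 => ?_) hprob
    by_contra hq0
    have hmem : t ∈ {t | t ∈ T ∧ 0 < Xi q t} := ⟨ht, pos_iff_ne_zero.mpr hq0⟩
    rw [← hsupp] at hmem
    exact hmem.2.ne' hp0

theorem stmt3 (T : Set (List ℕ)) (p q : List ℕ → ℕ → ℝ≥0∞)
    (hT : IsTree T) (hp : IsProbTree T p) (hq : IsProbTree T q) :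
    (∀ t ∈ T, Xi p t = Xi q t) ↔
      (({t | t ∈ T ∧ 0 < Xi p t} = {t | t ∈ T ∧ 0 < Xi q t}) ∧
        (∀ t ∈ T, ∀ k : ℕ, t ++ [k] ∈ T → 0 < Xi p (t ++ [k]) → p t k = q t k)) :=
  stmt3_general T p q hT hp
end
end

section
/- Let T be a pruned tree of sequences. Then lim T, as a subspace of the Baire space, is compact if and only if T is finitely branching, i.e. every t ∈ T has only finitely many successors in T. -/
open scoped ENNReal
open MeasureTheory

noncomputable section

/-!
In a finitely branching tree every level is finite, so the `n`-th coordinate of a branch ranges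
over a finite set; the body, being closed, then lies in a product of finite sets and is compact by
Tychonoff. Conversely, if `t` has infinitely many successors `t ++ [k]`, pruning puts a branch
through each, so the continuous coordinate map `x ↦ x |t|` sends the compact clopen cylinder `[t]`
onto an infinite subset of the discrete space `ℕ`, which is impossible.
-/

lemma isClopen_setOf_map_range_mem {α : Type*} [TopologicalSpace α] [DiscreteTopology α]
    (n : ℕ) (A : Set (List α)) : IsClopen {x : ℕ → α | (List.range n).map x ∈ A} := by
  have hrestrict : Continuous fun (x : ℕ → α) (i : Fin n) => x i :=
    continuous_pi fun i => continuous_apply _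
  have hofFn : ∀ x : ℕ → α, List.ofFn (fun i : Fin n => x i) = (List.range n).map x :=
    fun x => List.ext_getElem (by simp) (by simp)
  have hset : {x : ℕ → α | (List.range n).map x ∈ A}
      = (fun (x : ℕ → α) (i : Fin n) => x i) ⁻¹' {f | List.ofFn f ∈ A} := by
    ext x
    simp only [Set.mem_preimage, Set.mem_ofPred_eq, hofFn]
  rw [hset]
  exact (isClopen_discrete _).preimage hrestrict

lemma isClosed_limT (T : Set (List ℕ)) : IsClosed (limT T) := by
  rw [limT, Set.ofPred_forall]
  exact isClosed_iInter fun n => (isClopen_setOf_map_range_mem n T).isClosed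

lemma exists_map_range_eq_take {α : Type*} [Inhabited α] (u : ℕ → List α)
    (hu : ∀ n, u n <+: u (n + 1)) (hlen : ∀ n, n ≤ (u n).length) :
    ∃ x : ℕ → α, ∀ n, (List.range n).map x = (u n).take n := by
  have hmono : ∀ {m n}, m ≤ n → u m <+: u n := by
    intro m n hmn
    induction hmn with
    | refl => exact List.prefix_rfl
    | step _ ih => exact ih.trans (hu _)
  refine ⟨fun i => (u (i + 1))[i]'(hlen (i + 1)), fun n => ?_⟩
  refine List.ext_getElem (by simp [hlen n]) fun i hi _ => ?_
  simp only [List.length_map, List.length_range] at hi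
  simp only [List.getElem_map, List.getElem_range, List.getElem_take]
  exact (hmono hi).getElem _

lemma exists_mem_limT_map_range_eq {T : Set (List ℕ)} (hT : IsTree T) (hpr : Pruned T)
    {t : List ℕ} (ht : t ∈ T) : ∃ x ∈ limT T, (List.range t.length).map x = t := by
  choose! next hnext using hpr
  set u : ℕ → List ℕ := fun n => (fun s => s ++ [next s])^[n] t
  have hu_succ : ∀ n, u (n + 1) = u n ++ [next (u n)] := fun n =>
    Function.iterate_succ_apply' _ n t
  have hu_mem : ∀ n, u n ∈ T := by
    intro n
    induction n with
    | zero => exact ht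
    | succ n ih => rw [hu_succ]; exact hnext _ ih
  have hu_length : ∀ n, (u n).length = t.length + n := by
    intro n
    induction n with
    | zero => rfl
    | succ n ih => rw [hu_succ, List.length_append, ih]; rfl
  have hu_prefix : ∀ n, u n <+: u (n + 1) := fun n => hu_succ n ▸ List.prefix_append _ _
  have ht_prefix : ∀ n, t <+: u n := by
    intro n
    induction n with
    | zero => exact List.prefix_rfl
    | succ n ih => exact ih.trans (hu_prefix n)
  obtain ⟨x, hx⟩ := exists_map_range_eq_take u hu_prefix (fun n => by simp [hu_length])
  refine ⟨x, fun n => hx n ▸ hT.2 _ _ (List.take_prefix _ _) (hu_mem n), ?_⟩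
  rw [hx, ← List.prefix_iff_eq_take.mp (ht_prefix _)]

lemma finite_setOf_mem_length_eq {T : Set (List ℕ)} (hT : IsTree T)
    (hfin : ∀ t ∈ T, {k : ℕ | t ++ [k] ∈ T}.Finite) (n : ℕ) :
    {s ∈ T | s.length = n}.Finite := by
  induction n with
  | zero =>
    refine (Set.finite_singleton []).subset fun s hs => ?_
    exact List.length_eq_zero_iff.mp hs.2
  | succ n ih =>
    refine (ih.biUnion fun s hs => (hfin s hs.1).image fun k => s ++ [k]).subset ?_
    rintro s ⟨hsT, hslen⟩
    have hs : s ≠ [] := List.ne_nil_of_length_eq_add_one hslen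
    rw [← List.dropLast_append_getLast hs] at hsT ⊢
    refine Set.mem_biUnion ⟨hT.2 _ _ (List.prefix_append _ _) hsT, by simp [hslen]⟩ ⟨_, hsT, rfl⟩

lemma isCompact_limT {T : Set (List ℕ)} (hT : IsTree T)
    (hfin : ∀ t ∈ T, {k : ℕ | t ++ [k] ∈ T}.Finite) : IsCompact (limT T) := by
  set S : ℕ → Set ℕ := fun n => ⋃ s ∈ {s ∈ T | s.length = n}, {k | s ++ [k] ∈ T}
  have hS : ∀ n, (S n).Finite := fun n =>
    (finite_setOf_mem_length_eq hT hfin n).biUnion fun s hs => hfin s hs.1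
  have hsub : limT T ⊆ Set.univ.pi S := by
    intro x hx n _
    refine Set.mem_biUnion (x := (List.range n).map x) ⟨hx n, by simp⟩ ?_
    simpa [List.range_succ] using hx (n + 1)
  exact (isCompact_univ_pi fun n => (hS n).isCompact).of_isClosed_subset (isClosed_limT T) hsub

lemma finite_setOf_append_mem_of_isCompact {T : Set (List ℕ)} (hT : IsTree T) (hpr : Pruned T)
    (hK : IsCompact (limT T)) (t : List ℕ) : {k : ℕ | t ++ [k] ∈ T}.Finite := by
  have hcyl : IsCompact (limT T ∩ {x | (List.range t.length).map x ∈ ({t} : Set (List ℕ))}) :=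
    hK.inter_right (isClopen_setOf_map_range_mem _ _).isClosed
  refine ((hcyl.image (continuous_apply t.length)).finite_of_discrete).subset fun k hk => ?_
  obtain ⟨x, hx, hxt⟩ := exists_mem_limT_map_range_eq hT hpr hk
  simp only [List.length_append, List.length_singleton, List.range_succ, List.map_append,
    List.map_singleton, List.append_singleton_inj] at hxt
  exact ⟨x, ⟨hx, hxt.1⟩, hxt.2⟩

theorem stmt8 (T : Set (List ℕ)) (hT : IsTree T) (hpr : Pruned T) :
    CompactSpace ↥(limT T) ↔ ∀ t ∈ T, {k : ℕ | t ++ [k] ∈ T}.Finite := by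
  rw [← isCompact_iff_compactSpace]
  exact ⟨fun hK t _ => finite_setOf_append_mem_of_isCompact hT hpr hK t, isCompact_limT hT⟩
end
end

section
/- Fix a natural number n and real numbers p₀ with 0 ≤ p₀ ≤ 1, and a function P : List ℕ → ℝ such that p₀ ≤ P(s) ≤ 1 for every binary list s (a list with entries in {0,1}) of length < n. For a binary string t of length n (a function t : Fin n → Fin 2), define its weight w(t) := ∏_{i < n} (P([t 0, …, t(i−1)]) if t(i) = 0, and 1 − P([t 0, …, t(i−1)]) if t(i) = 1), and let Y(t) := |{i < n : t(i) = 0}| be its number of successes. Then for every real number z: ∑ over {t : Fin n → Fin 2 with (Y(t) : ℝ) ≤ z} of w(t) ≤ ∑ over {j ∈ ℕ : j ≤ n and (j : ℝ) ≤ z} of (n choose j) · p₀^j · (1 − p₀)^(n−j). That is, the cumulative distribution of the number of successes of n dependent Bernoulli trials, each with success probability at least p₀ given any history, is bounded above by the cumulative distribution of the binomial distribution with parameters n and p₀. -/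
noncomputable section

/-- weight of an outcome string -/
def Wt (n : ℕ) (P : List ℕ → ℝ) (t : Fin n → Fin 2) : ℝ :=
  ∏ i : Fin n,
    (if t i = 0 then
      P (List.ofFn fun j : Fin i.1 => (t (Fin.castLE i.isLt.le j) : ℕ))
    else
      1 - P (List.ofFn fun j : Fin i.1 => (t (Fin.castLE i.isLt.le j) : ℕ)))

/-- CDF of the number of successes -/
def Fc (n : ℕ) (P : List ℕ → ℝ) (z : ℝ) : ℝ :=
  ∑ t : Fin n → Fin 2,
    if ((Finset.univ.filter fun i : Fin n => t i = 0).card : ℝ) ≤ z then Wt n P t else 0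

/-- binomial CDF -/
def Bc (n : ℕ) (p z : ℝ) : ℝ :=
  ∑ j ∈ Finset.range (n + 1),
    (if (j : ℝ) ≤ z then (n.choose j : ℝ) * p ^ j * (1 - p) ^ (n - j) else 0)

lemma Bc_mono (n : ℕ) (p z : ℝ) (h0 : 0 ≤ p) (h1 : p ≤ 1) :
    Bc n p (z - 1) ≤ Bc n p z := by
  apply Finset.sum_le_sum
  intro j _
  have hnn : 0 ≤ (n.choose j : ℝ) * p ^ j * (1 - p) ^ (n - j) :=
    mul_nonneg (mul_nonneg (Nat.cast_nonneg _) (pow_nonneg h0 _))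
      (pow_nonneg (by linarith) _)
  by_cases h : (j : ℝ) ≤ z - 1
  · have h' : (j : ℝ) ≤ z := by linarith
    simp [h, h']
  · by_cases h' : (j : ℝ) ≤ z <;> simp [h, h', hnn]
lemma Bc_succ (n : ℕ) (p z : ℝ) :
    Bc (n + 1) p z = p * Bc n p (z - 1) + (1 - p) * Bc n p z := by
  simp only [Bc]
  rw [show (∑ j ∈ Finset.range (n + 1),
      (if (j : ℝ) ≤ z then (n.choose j : ℝ) * p ^ j * (1 - p) ^ (n - j) else 0))
      = ∑ j ∈ Finset.range (n + 2),
      (if (j : ℝ) ≤ z then (n.choose j : ℝ) * p ^ j * (1 - p) ^ (n - j) else 0) from by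
    rw [Finset.sum_range_succ (n := n + 1)]
    simp [Nat.choose_succ_self]]
  rw [Finset.sum_range_succ' _ (n + 1), Finset.sum_range_succ' _ (n + 1),
    mul_add, Finset.mul_sum, Finset.mul_sum]
  have key : ∀ j ∈ Finset.range (n + 1),
      (if ((j + 1 : ℕ) : ℝ) ≤ z then ((n + 1).choose (j + 1) : ℝ) * p ^ (j + 1) * (1 - p) ^ (n + 1 - (j + 1)) else 0)
      = p * (if (j : ℝ) ≤ z - 1 then (n.choose j : ℝ) * p ^ j * (1 - p) ^ (n - j) else 0)
        + (1 - p) * (if ((j + 1 : ℕ) : ℝ) ≤ z then (n.choose (j + 1) : ℝ) * p ^ (j + 1) * (1 - p) ^ (n - (j + 1)) else 0) := by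
    intro j hj
    have hind : ((j : ℝ) ≤ z - 1) ↔ (((j + 1 : ℕ) : ℝ) ≤ z) := by
      push_cast; constructor <;> intro h <;> linarith
    by_cases h : ((j + 1 : ℕ) : ℝ) ≤ z
    · rw [if_pos h, if_pos (hind.mpr h), if_pos h]
      have hcs : ((n + 1).choose (j + 1) : ℝ) = (n.choose j : ℝ) + (n.choose (j + 1) : ℝ) := by
        rw [Nat.choose_succ_succ]; push_cast; ring
      rw [hcs]
      have hj' : j < n + 1 := Finset.mem_range.mp hj
      rcases Nat.lt_or_ge j n with hlt | hge
      · have h1 : n + 1 - (j + 1) = n - j := by omega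
        have h2 : n - j = (n - (j + 1)) + 1 := by omega
        rw [h1, h2]
        ring
      · have hjn : j = n := by omega
        rw [show n.choose (j + 1) = 0 from by rw [hjn]; exact Nat.choose_succ_self n,
          show n + 1 - (j + 1) = 0 from by omega, show n - j = 0 from by omega]
        push_cast
        ring
    · rw [if_neg h, if_neg (fun hc => h (hind.mp hc)), if_neg h]
      ring
  rw [Finset.sum_congr rfl key, Finset.sum_add_distrib]
  have hbd : (if ((0 : ℕ) : ℝ) ≤ z then ((n + 1).choose 0 : ℝ) * p ^ 0 * (1 - p) ^ (n + 1 - 0) else 0)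
      = (1 - p) * (if ((0 : ℕ) : ℝ) ≤ z then (n.choose 0 : ℝ) * p ^ 0 * (1 - p) ^ (n - 0) else 0) := by
    by_cases hz0 : ((0 : ℕ) : ℝ) ≤ z
    · rw [if_pos hz0, if_pos hz0, Nat.choose_zero_right, Nat.choose_zero_right,
        Nat.sub_zero, Nat.sub_zero, pow_succ]
      push_cast
      ring
    · rw [if_neg hz0, if_neg hz0]
      ring
  rw [hbd]
  try ring
lemma Wt_cons (n : ℕ) (P : List ℕ → ℝ) (a : Fin 2) (t : Fin n → Fin 2) :
    Wt (n + 1) P (Fin.cons a t) =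
      (if a = 0 then P [] else 1 - P []) * Wt n (fun s => P ((a : ℕ) :: s)) t := by
  rw [Wt, Fin.prod_univ_succ, Wt]
  congr 1
  simp
lemma card_cons (n : ℕ) (a : Fin 2) (t : Fin n → Fin 2) :
    (Finset.univ.filter fun i : Fin (n+1) => (Fin.cons a t : Fin (n+1) → Fin 2) i = 0).card
      = (if a = 0 then 1 else 0) + (Finset.univ.filter fun i : Fin n => t i = 0).card := by
  rw [Finset.card_filter, Finset.card_filter, Fin.sum_univ_succ]
  simp [Fin.cons_succ]

lemma Fc_succ (n : ℕ) (P : List ℕ → ℝ) (z : ℝ) :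
    Fc (n + 1) P z = P [] * Fc n (fun s => P (0 :: s)) (z - 1)
      + (1 - P []) * Fc n (fun s => P (1 :: s)) z := by
  have step0 : ∀ t : Fin n → Fin 2,
      (if ((Finset.univ.filter fun i : Fin (n+1) => (Fin.cons 0 t : Fin (n+1) → Fin 2) i = 0).card : ℝ) ≤ z then
        Wt (n+1) P (Fin.cons 0 t) else 0)
      = P [] * (if ((Finset.univ.filter fun i : Fin n => t i = 0).card : ℝ) ≤ z - 1 then
          Wt n (fun s => P ((0 : ℕ) :: s)) t else 0) := by
    intro t
    rw [card_cons, Wt_cons, if_pos rfl, if_pos rfl, mul_ite, mul_zero]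
    apply if_congr _ rfl rfl
    push_cast
    constructor <;> intro <;> linarith
  have step1 : ∀ t : Fin n → Fin 2,
      (if ((Finset.univ.filter fun i : Fin (n+1) => (Fin.cons 1 t : Fin (n+1) → Fin 2) i = 0).card : ℝ) ≤ z then
        Wt (n+1) P (Fin.cons 1 t) else 0)
      = (1 - P []) * (if ((Finset.univ.filter fun i : Fin n => t i = 0).card : ℝ) ≤ z then
          Wt n (fun s => P ((1 : ℕ) :: s)) t else 0) := by
    intro t
    have h10 : ¬((1 : Fin 2) = 0) := by decide
    rw [card_cons, Wt_cons, if_neg h10, if_neg h10, mul_ite, mul_zero]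
    apply if_congr _ rfl rfl
    push_cast
    constructor <;> intro <;> linarith
  rw [Fc]
  rw [← Equiv.sum_comp (Fin.consEquiv fun _ : Fin (n + 1) => Fin 2)]
  rw [Fintype.sum_prod_type, Fin.sum_univ_two]
  have e0 : ∀ t : Fin n → Fin 2,
      (Fin.consEquiv fun _ : Fin (n + 1) => Fin 2) (0, t) = Fin.cons 0 t := fun _ => rfl
  have e1 : ∀ t : Fin n → Fin 2,
      (Fin.consEquiv fun _ : Fin (n + 1) => Fin 2) (1, t) = Fin.cons 1 t := fun _ => rfl
  simp only [e0, e1]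
  rw [Finset.sum_congr rfl (fun t _ => step0 t), Finset.sum_congr rfl (fun t _ => step1 t),
    ← Finset.mul_sum, ← Finset.mul_sum]
  rfl
lemma main_lemma (n : ℕ) (p₀ : ℝ) (hp₀ : 0 ≤ p₀) (hp₁ : p₀ ≤ 1) :
    ∀ P : List ℕ → ℝ,
      (∀ s : List ℕ, (∀ x ∈ s, x < 2) → s.length < n → p₀ ≤ P s ∧ P s ≤ 1) →
      ∀ z : ℝ, Fc n P z ≤ Bc n p₀ z := by
  induction n with
  | zero =>
    intro P _ z
    rw [Fc, Bc]
    simp [Wt]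
  | succ n ih =>
    intro P hP z
    have hP0 : ∀ s : List ℕ, (∀ x ∈ s, x < 2) → s.length < n →
        p₀ ≤ (fun s => P (0 :: s)) s ∧ (fun s => P (0 :: s)) s ≤ 1 := by
      intro s hs hlen
      exact hP (0 :: s) (by intro x hx; rcases List.mem_cons.mp hx with h | h; omega; exact hs x h)
        (by simpa using Nat.succ_lt_succ hlen)
    have hP1 : ∀ s : List ℕ, (∀ x ∈ s, x < 2) → s.length < n →
        p₀ ≤ (fun s => P (1 :: s)) s ∧ (fun s => P (1 :: s)) s ≤ 1 := by
      intro s hs hlen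
      exact hP (1 :: s) (by intro x hx; rcases List.mem_cons.mp hx with h | h; omega; exact hs x h)
        (by simpa using Nat.succ_lt_succ hlen)
    have hq := hP [] (by simp) (Nat.succ_pos n)
    set q := P [] with hqdef
    have h0 : Fc n (fun s => P (0 :: s)) (z - 1) ≤ Bc n p₀ (z - 1) := ih _ hP0 (z - 1)
    have h1 : Fc n (fun s => P (1 :: s)) z ≤ Bc n p₀ z := ih _ hP1 z
    have hmono := Bc_mono n p₀ z hp₀ hp₁
    rw [Fc_succ, Bc_succ]
    have hq0 : 0 ≤ q := le_trans hp₀ hq.1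
    have hq1 : q ≤ 1 := hq.2
    have step1 : q * Fc n (fun s => P (0 :: s)) (z - 1) + (1 - q) * Fc n (fun s => P (1 :: s)) z
        ≤ q * Bc n p₀ (z - 1) + (1 - q) * Bc n p₀ z := by
      have := mul_le_mul_of_nonneg_left h0 hq0
      have := mul_le_mul_of_nonneg_left h1 (by linarith : (0:ℝ) ≤ 1 - q)
      linarith
    have step2 : q * Bc n p₀ (z - 1) + (1 - q) * Bc n p₀ z
        ≤ p₀ * Bc n p₀ (z - 1) + (1 - p₀) * Bc n p₀ z := by
      nlinarith [hq.1, hmono]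
    linarith

theorem stmt9 (n : ℕ) (p₀ : ℝ) (P : List ℕ → ℝ)
    (hp₀ : 0 ≤ p₀) (hp₁ : p₀ ≤ 1)
    (hP : ∀ s : List ℕ, (∀ x ∈ s, x < 2) → s.length < n → p₀ ≤ P s ∧ P s ≤ 1) :
    ∀ z : ℝ,
      (∑ t : Fin n → Fin 2,
        if ((Finset.univ.filter fun i : Fin n => t i = 0).card : ℝ) ≤ z then
          ∏ i : Fin n,
            (if t i = 0 then
              P (List.ofFn fun j : Fin i.1 => (t (Fin.castLE i.isLt.le j) : ℕ))
            else
              1 - P (List.ofFn fun j : Fin i.1 => (t (Fin.castLE i.isLt.le j) : ℕ)))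
        else 0)
      ≤ ∑ j ∈ Finset.range (n + 1),
          (if (j : ℝ) ≤ z then (n.choose j : ℝ) * p₀ ^ j * (1 - p₀) ^ (n - j) else 0) := by
  intro z
  exact main_lemma n p₀ hp₀ hp₁ P hP z
end
end

section
/- Let T be a tree of sequences and p a probability tree on T. For s, r ∈ T with s a prefix of r, define the relative weight Ξ_p(r ∣ s) := ∏_{|s| ≤ i < |r|} p (r↾i) (r i). Let m ≤ n ≤ k be natural numbers, let t ∈ T with |t| = m, and assume that every maximal element of T having t as a prefix has length at least k. Then for every function X : List ℕ → ℝ≥0∞: ∑' over {r ∈ Lv_k(T) : t is a prefix of r} of X(r) · Ξ_p(r ∣ t) = ∑' over {s ∈ Lv_n(T) : t is a prefix of s} of Ξ_p(s ∣ t) · (∑' over {r ∈ Lv_k(T) : s is a prefix of r} of X(r) · Ξ_p(r ∣ s)). That is, the relative expected value of X with respect to t equals the composition of relative expected values through any intermediate level. -/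
open scoped ENNReal
open MeasureTheory

noncomputable section

/-- The relative weight `Ξ_p(r ∣ s) = ∏_{|s| ≤ i < |r|} p (r↾i) (r i)`. -/
def XiRel (p : List ℕ → ℕ → ℝ≥0∞) (s r : List ℕ) : ℝ≥0∞ :=
  ∏ i ∈ Finset.Ico s.length r.length, p (r.take i) (r.getD i 0)

theorem stmt10 (T : Set (List ℕ)) (p : List ℕ → ℕ → ℝ≥0∞)
    (hT : IsTree T) (hp : IsProbTree T p)
    (m n k : ℕ) (hmn : m ≤ n) (hnk : n ≤ k)
    (t : List ℕ) (ht : t ∈ T) (htm : t.length = m)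
    (hmax : ∀ r ∈ T, IsMaxNode T r → t <+: r → k ≤ r.length)
    (X : List ℕ → ℝ≥0∞) :
    ∑' r : {r : List ℕ // r ∈ T ∧ r.length = k ∧ t <+: r}, X r.1 * XiRel p t r.1
      = ∑' s : {s : List ℕ // s ∈ T ∧ s.length = n ∧ t <+: s},
          XiRel p t s.1 *
            ∑' r : {r : List ℕ // r ∈ T ∧ r.length = k ∧ s.1 <+: r},
              X r.1 * XiRel p s.1 r.1 := by
  classical
  have hkey : ∀ r : List ℕ, r.length = k → t <+: r →
      XiRel p t r = XiRel p t (r.take n) * XiRel p (r.take n) r := by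
    intro r hrk htr
    have hlen : (r.take n).length = n := by simp [hrk, hnk]
    unfold XiRel
    rw [htm, hlen, hrk, ← Finset.prod_Ico_consecutive _ hmn hnk]
    congr 1
    apply Finset.prod_congr rfl
    intro i hi
    obtain ⟨_, hin⟩ := Finset.mem_Ico.mp hi
    rw [List.take_take, min_eq_left hin.le]
    congr 1
    simp [List.getD, List.getElem?_take, hin]
  have htake : ∀ r : List ℕ, r ∈ T → r.length = k → t <+: r →
      (r.take n ∈ T ∧ (r.take n).length = n ∧ t <+: r.take n) := by
    intro r hr hrk htr
    refine ⟨hT.2 _ _ (List.take_prefix _ _) hr, by simp [hrk, hnk], ?_⟩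
    have h1 : t = r.take m := by rw [← htm]; exact List.prefix_iff_eq_take.mp htr
    have h2 : (r.take n).take m = r.take m := by rw [List.take_take, min_eq_left hmn]
    rw [h1, ← h2]
    exact List.take_prefix _ _
  let S := {s : List ℕ // s ∈ T ∧ s.length = n ∧ t <+: s}
  let R : S → Type := fun s => {r : List ℕ // r ∈ T ∧ r.length = k ∧ s.1 <+: r}
  let e : (Σ s : S, R s) ≃ {r : List ℕ // r ∈ T ∧ r.length = k ∧ t <+: r} :=
    { toFun := fun σ => ⟨σ.2.1, σ.2.2.1, σ.2.2.2.1, σ.1.2.2.2.trans σ.2.2.2.2⟩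
      invFun := fun r => ⟨⟨r.1.take n, htake r.1 r.2.1 r.2.2.1 r.2.2.2⟩,
        ⟨r.1, r.2.1, r.2.2.1, List.take_prefix _ _⟩⟩
      left_inv := by
        rintro ⟨⟨s, hs⟩, ⟨r, hr⟩⟩
        have hts : r.take n = s := by
          have h := List.prefix_iff_eq_take.mp hr.2.2
          rw [hs.2.1] at h
          exact h.symm
        subst hts
        rfl
      right_inv := fun r => rfl }
  calc ∑' r : {r : List ℕ // r ∈ T ∧ r.length = k ∧ t <+: r}, X r.1 * XiRel p t r.1
      = ∑' σ : Σ s : S, R s, X (e σ).1 * XiRel p t (e σ).1 := (e.tsum_eq _).symm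
    _ = ∑' σ : Σ s : S, R s,
          XiRel p t σ.1.1 * (X σ.2.1 * XiRel p σ.1.1 σ.2.1) := by
        apply tsum_congr
        rintro ⟨⟨s, hs⟩, ⟨r, hr⟩⟩
        have hts : r.take n = s := by
          have h := List.prefix_iff_eq_take.mp hr.2.2
          rw [hs.2.1] at h
          exact h.symm
        show X r * XiRel p t r = _
        rw [hkey r hr.2.1 (hs.2.2.trans hr.2.2), hts]
        ring
    _ = ∑' s : S, ∑' r : R s, XiRel p t s.1 * (X r.1 * XiRel p s.1 r.1) :=
        ENNReal.tsum_sigma (fun (s : S) (r : R s) => XiRel p t s.1 * (X r.1 * XiRel p s.1 r.1))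
    _ = ∑' s : S, XiRel p t s.1 * ∑' r : R s, X r.1 * XiRel p s.1 r.1 :=
        tsum_congr fun s => ENNReal.tsum_mul_left
end
end

section
/- Let T be a pruned tree of sequences and ξ an inductive probability measure on T, and let λ^ξ be the unique Borel probability measure on lim T with λ^ξ([t]) = ξ(t) for all t ∈ T. Let S ⊆ T be a set that is itself a pruned tree of sequences (nonempty, closed under prefixes, and every element of S has a successor in S). Then λ^ξ(lim S) = ⨅_{n ∈ ℕ} ∑' over t ∈ Lv_n(S) of ξ(t), where lim S ⊆ lim T is the (closed) set of infinite branches of S. -/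
open scoped ENNReal
open MeasureTheory

noncomputable section

/-!
The branches of `S` are the intersection of the decreasing sets `Aₙ` of branches of `T` whose
initial segment of length `n` lies in `S`. Each `Aₙ` is the disjoint union of the cylinders `[t]`,
`t ∈ Lvₙ(S)`, so `λ(Aₙ) = ∑' t ∈ Lvₙ(S), ξ(t)`, and continuity from above of the finite measure
`λ` gives the claim.
-/

lemma List.map_range_eq_ofFn (n : ℕ) (x : ℕ → ℕ) :
    (List.range n).map x = List.ofFn fun i : Fin n => x i := by
  apply List.ext_getElem <;> simp

lemma measurableSet_setOf_map_range_mem (n : ℕ) (s : Set (List ℕ)) :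
    MeasurableSet {x : ℕ → ℕ | (List.range n).map x ∈ s} := by
  have hpre : {x : ℕ → ℕ | (List.range n).map x ∈ s} =
      (fun x (i : Fin n) => x i) ⁻¹' {v | List.ofFn v ∈ s} := by
    ext x
    simp [List.map_range_eq_ofFn]
  rw [hpre]
  exact (measurable_pi_lambda _ fun i => measurable_pi_apply _) (Set.to_countable _).measurableSet

lemma disjoint_cyl {T : Set (List ℕ)} {s t : List ℕ} (hlen : s.length = t.length) (hst : s ≠ t) :
    Disjoint (cyl T s) (cyl T t) :=
  Set.disjoint_left.2 fun x hs ht => hst <| by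
    simp only [cyl, Set.mem_ofPred_eq, hlen] at hs ht
    exact hs.symm.trans ht

lemma setOf_map_range_mem_eq_iUnion_cyl (T S : Set (List ℕ)) (n : ℕ) :
    {x : ↥(limT T) | (List.range n).map x.1 ∈ S} =
      ⋃ t : {t : List ℕ // t ∈ S ∧ t.length = n}, cyl T t.1 := by
  ext x
  simp only [Set.mem_ofPred_eq, Set.mem_iUnion, cyl]
  constructor
  · intro hx
    exact ⟨⟨_, hx, by simp⟩, by simp⟩
  · rintro ⟨⟨t, ht, rfl⟩, hx⟩
    rwa [hx]

lemma measure_setOf_map_range_mem {T S : Set (List ℕ)} {ξ : List ℕ → ℝ≥0∞}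
    (lam : Measure ↥(limT T)) (hcyl : ∀ t ∈ S, lam (cyl T t) = ξ t) (n : ℕ) :
    lam {x : ↥(limT T) | (List.range n).map x.1 ∈ S} =
      ∑' t : {t : List ℕ // t ∈ S ∧ t.length = n}, ξ t.1 := by
  rw [setOf_map_range_mem_eq_iUnion_cyl, measure_iUnion]
  · exact tsum_congr fun t => hcyl t.1 t.2.1
  · intro s t hst
    exact disjoint_cyl (s.2.2.trans t.2.2.symm) (Subtype.coe_injective.ne hst)
  · exact fun t => measurable_subtype_coe (measurableSet_setOf_map_range_mem _ {t.1})

lemma antitone_setOf_map_range_mem {T S : Set (List ℕ)}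
    (hS : ∀ s t : List ℕ, s <+: t → t ∈ S → s ∈ S) :
    Antitone fun n => {x : ↥(limT T) | (List.range n).map x.1 ∈ S} :=
  antitone_nat_of_succ_le fun _ _ hx =>
    hS _ _ (List.IsPrefix.map _ (List.range_succ ▸ List.prefix_append _ _)) hx

theorem stmt11_general (T S : Set (List ℕ)) (ξ : List ℕ → ℝ≥0∞)
    (hST : S ⊆ T) (hS : IsTree S)
    (lam : Measure ↥(limT T)) (hlam : IsProbabilityMeasure lam)
    (hcyl : ∀ t ∈ T, lam (cyl T t) = ξ t) :
    lam {x : ↥(limT T) | ∀ n : ℕ, (List.range n).map x.1 ∈ S}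
      = ⨅ n : ℕ, ∑' t : {t : List ℕ // t ∈ S ∧ t.length = n}, ξ t.1 := by
  rw [Set.ofPred_forall, (antitone_setOf_map_range_mem hS.2).measure_iInter
    (fun n => (measurable_subtype_coe (measurableSet_setOf_map_range_mem n S)).nullMeasurableSet)
    ⟨0, measure_ne_top _ _⟩]
  exact iInf_congr (measure_setOf_map_range_mem lam fun t ht => hcyl t (hST ht))

theorem stmt11 (T S : Set (List ℕ)) (ξ : List ℕ → ℝ≥0∞)
    (hT : IsTree T) (hpr : Pruned T) (hξ : IsIPM T ξ)
    (hST : S ⊆ T) (hS : IsTree S) (hSpr : Pruned S)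
    (lam : Measure ↥(limT T)) (hlam : IsProbabilityMeasure lam)
    (hcyl : ∀ t ∈ T, lam (cyl T t) = ξ t) :
    lam {x : ↥(limT T) | ∀ n : ℕ, (List.range n).map x.1 ∈ S}
      = ⨅ n : ℕ, ∑' t : {t : List ℕ // t ∈ S ∧ t.length = n}, ξ t.1 :=
  stmt11_general T S ξ hST hS lam hlam hcyl
end
end
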